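/- Suppose an endogenous event at time τ(θ) is defined by the guard x₁(θ, τ(θ)) = 0, the left dynamics of x₁ are ẋ₁ = α₁(t) − h₁(t) with α₁(τ⁻) − h₁(τ⁻) ≠ 0, and the dynamics of x₃ jump at τ by f₃(τ⁻) − f₃(τ⁺) = h₁(τ⁻) − α₁(τ⁻). Then x₃'(τ⁺) = x₃'(τ⁻) + x₁'(τ⁻), i.e., the derivative of the downstream queue content absorbs exactly the derivative of the upstream queue content. -/
import Mathlib

/-- When upstream queue 1 empties (event E₁ with guard x₁ = 0, left dynamics
ẋ₁ = α₁ − h₁ ≠ 0, and downstream dynamics jump f₃(τ⁻) − f₃(τ⁺) = h₁ − α₁),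
combining the IPA jump rule with the endogenous event-time derivative
τ' = −x₁'(τ⁻)/(α₁ − h₁) yields x₃'(τ⁺) = x₃'(τ⁻) + x₁'(τ⁻). -/
theorem stmt4 (α₁ h₁ x1m x3m x3p τ' : ℝ)
    (hne : α₁ - h₁ ≠ 0)
    (hτ : τ' = -x1m / (α₁ - h₁))
    (hjump : x3p = x3m + (h₁ - α₁) * τ') :
    x3p = x3m + x1m := by
  subst hτ hjump
  field_simp
  ring
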